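/- Let f : ℝⁿ → ℝ be C¹ with M-Lipschitz gradient on a suitable convex set containing the iterates, β ∈ (−1,1), γ ∈ ℝ, α ∈ (0, ᾱ] with ᾱ = min{1/M, (1−β²)/(2(β²+2|β−γ|)M)}, and λ ∈ (λ⁻, λ⁺) with λ⁻, λ⁺ as in the previous definitions. Define H_λ(x,y) = f(x) + λ‖x−y‖². Then for momentum iterates x_{k+1} = x_k + β(x_k−x_{k−1}) − α∇f(x_k + γ(x_k−x_{k−1})), with c₁ = min{λ−λ⁻, λ⁺−λ} > 0, one has H_λ(x_{k+1},x_k) ≤ H_λ(x_k,x_{k−1}) − c₁(‖x_{k+1}−x_k‖² + ‖x_k−x_{k−1}‖²). -/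

import Mathlib

/-!
Applying the descent lemma `|f v - f u - ⟪∇f u, v - u⟫| ≤ M/2 ‖v - u‖²` at the extrapolated point
`z = x_k + β (x_k - x_{k-1})`, towards `x_{k+1}` and towards `x_k`, bounds `f x_{k+1} - f x_k` by
`⟪∇f z, x_{k+1} - x_k⟫` plus quadratic terms. Trading `∇f z` for the gradient at the evaluation
point `y = x_k + γ (x_k - x_{k-1})` costs `M |β - γ| ‖x_k - x_{k-1}‖ ‖x_{k+1} - x_k‖`, and the update
rule expresses `α ∇f y` through the two consecutive steps. Two AM–GM estimates then give
`f x_{k+1} ≤ f x_k + λ⁻ ‖x_k - x_{k-1}‖² - λ⁺ ‖x_{k+1} - x_k‖²`, which rearranges to the claim.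
-/

open scoped RealInnerProductSpace
open Set

theorem momentum_quadratic_bound {α β M r a b p : ℝ} (hα : 0 < α) (hM : 0 ≤ M)
    (hαM : M * α ≤ 1) (hr : 0 ≤ r) (hp : |p| ≤ a * b) :
    (β * p - b ^ 2) / α + M * r * a * b
        + M / 2 * (b ^ 2 - 2 * β * p + β ^ 2 * a ^ 2 + β ^ 2 * a ^ 2)
      ≤ ((1 / (2 * α) + M / 2) * β ^ 2 + r * M / 2) * a ^ 2
        - (1 / (2 * α) - r * M / 2) * b ^ 2 := by
  have hβp : β * p ≤ (β ^ 2 * a ^ 2 + b ^ 2) / 2 := by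
    have : β * p ≤ |β| * (a * b) :=
      (le_abs_self _).trans (abs_mul β p ▸ mul_le_mul_of_nonneg_left hp (abs_nonneg β))
    nlinarith [sq_nonneg (|β| * a - b), sq_abs β]
  have hab : a * b ≤ (a ^ 2 + b ^ 2) / 2 := by nlinarith [sq_nonneg (a - b)]
  have hc : 0 ≤ 1 / α - M := by rw [sub_nonneg, le_div_iff₀ hα]; exact hαM
  have h1 := mul_le_mul_of_nonneg_left hβp hc
  have h2 := mul_le_mul_of_nonneg_left hab (mul_nonneg hM hr)
  have e1 : (β * p - b ^ 2) / α = 1 / α * (β * p) - 1 / α * b ^ 2 := by ring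
  have e2 : 1 / (2 * α) = 1 / α / 2 := by ring
  rw [e1, e2]
  linarith

theorem add_mul_le_sub_min_mul_add {x y a b lo hi c : ℝ} (ha : 0 ≤ a) (hb : 0 ≤ b)
    (h : y ≤ x + lo * a - hi * b) :
    y + c * b ≤ x + c * a - min (c - lo) (hi - c) * (b + a) := by
  have h1 := mul_le_mul_of_nonneg_right (min_le_left (c - lo) (hi - c)) ha
  have h2 := mul_le_mul_of_nonneg_right (min_le_right (c - lo) (hi - c)) hb
  linarith

section Descent

variable {E : Type*} [NormedAddCommGroup E] [InnerProductSpace ℝ E] [CompleteSpace E]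
  {f : E → ℝ} {S : Set E} {M : ℝ}

theorem Convex.abs_sub_sub_inner_gradient_le (hS : Convex ℝ S) (hf : Differentiable ℝ f)
    (hLip : ∀ u ∈ S, ∀ v ∈ S, ‖gradient f u - gradient f v‖ ≤ M * ‖u - v‖)
    {u v : E} (hu : u ∈ S) (hv : v ∈ S) :
    |f v - f u - ⟪gradient f u, v - u⟫| ≤ M / 2 * ‖v - u‖ ^ 2 := by
  set w := v - u
  have hderiv (t : ℝ) : HasDerivAt (fun t : ℝ => f (u + t • w) - f u - t * ⟪gradient f u, w⟫)
      (⟪gradient f (u + t • w) - gradient f u, w⟫) t := by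
    have hline : HasDerivAt (fun t : ℝ => u + t • w) w t := by
      simpa using ((hasDerivAt_id t).smul_const w).const_add u
    have := (((hf _).hasGradientAt.hasFDerivAt.comp_hasDerivAt t hline).sub_const (f u)).sub
      ((hasDerivAt_id t).mul_const ⟪gradient f u, w⟫)
    refine this.congr_deriv ?_
    simp [inner_sub_left]
  have hB (t : ℝ) : HasDerivAt (fun t : ℝ => M / 2 * t ^ 2 * ‖w‖ ^ 2) (M * t * ‖w‖ ^ 2) t := by
    refine (((hasDerivAt_pow 2 t).const_mul (M / 2)).mul_const (‖w‖ ^ 2)).congr_deriv ?_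
    simp only [Nat.cast_ofNat, Nat.add_one_sub_one, pow_one]; ring
  have hbound : ∀ t ∈ Ico (0 : ℝ) 1,
      ‖⟪gradient f (u + t • w) - gradient f u, w⟫‖ ≤ M * t * ‖w‖ ^ 2 := fun t ht =>
    calc ‖⟪gradient f (u + t • w) - gradient f u, w⟫‖
        ≤ ‖gradient f (u + t • w) - gradient f u‖ * ‖w‖ := norm_inner_le_norm _ _
      _ ≤ M * ‖(u + t • w) - u‖ * ‖w‖ := by
          gcongr
          exact hLip _ (hS.add_smul_sub_mem hu hv (Ico_subset_Icc_self ht)) _ hu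
      _ = M * t * ‖w‖ ^ 2 := by
          rw [add_sub_cancel_left, norm_smul, Real.norm_of_nonneg ht.1]; ring
  -- Fencing against `M/2 t² ‖w‖²`, not the plain mean value inequality, gives the sharp `M/2`.
  have := image_norm_le_of_norm_deriv_right_le_deriv_boundary
    (fun t _ => (hderiv t).continuousAt.continuousWithinAt)
    (fun t _ => (hderiv t).hasDerivWithinAt) (by simp) hB hbound (right_mem_Icc.2 zero_le_one)
  simpa [w] using this

theorem Convex.le_add_inner_gradient_add (hS : Convex ℝ S) (hf : Differentiable ℝ f)
    (hLip : ∀ u ∈ S, ∀ v ∈ S, ‖gradient f u - gradient f v‖ ≤ M * ‖u - v‖)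
    {z u v : E} (hz : z ∈ S) (hu : u ∈ S) (hv : v ∈ S) :
    f v ≤ f u + ⟪gradient f z, v - u⟫ + M / 2 * (‖v - z‖ ^ 2 + ‖u - z‖ ^ 2) := by
  have hv' := (abs_le.1 (hS.abs_sub_sub_inner_gradient_le hf hLip hz hv)).2
  have hu' := (abs_le.1 (hS.abs_sub_sub_inner_gradient_le hf hLip hz hu)).1
  have : v - u = (v - z) - (u - z) := by abel
  rw [this, inner_sub_right]
  linarith

theorem Convex.momentum_step_le {α β γ : ℝ} {x₀ x₁ x₂ : E} (hS : Convex ℝ S)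
    (hf : Differentiable ℝ f)
    (hLip : ∀ u ∈ S, ∀ v ∈ S, ‖gradient f u - gradient f v‖ ≤ M * ‖u - v‖)
    (hM : 0 ≤ M) (hα : 0 < α) (hαM : M * α ≤ 1) (h₁ : x₁ ∈ S) (h₂ : x₂ ∈ S)
    (hβS : x₁ + β • (x₁ - x₀) ∈ S) (hγS : x₁ + γ • (x₁ - x₀) ∈ S)
    (hx₂ : x₂ = x₁ + β • (x₁ - x₀) - α • gradient f (x₁ + γ • (x₁ - x₀))) :
    f x₂ ≤ f x₁ + ((1 / (2 * α) + M / 2) * β ^ 2 + |β - γ| * M / 2) * ‖x₁ - x₀‖ ^ 2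
      - (1 / (2 * α) - |β - γ| * M / 2) * ‖x₂ - x₁‖ ^ 2 := by
  set d := x₁ - x₀
  set δ := x₂ - x₁
  set z := x₁ + β • d
  set y := x₁ + γ • d
  have hstep : α • gradient f y = β • d - δ := by simp only [δ, hx₂, z]; abel
  have hdescent := hS.le_add_inner_gradient_add hf hLip hβS h₁ h₂
  have hz₂ : x₂ - z = δ - β • d := by simp only [δ, z]; abel
  have hz₁ : x₁ - z = -(β • d) := by simp only [z]; abel
  have hshift : ⟪gradient f z, δ⟫ ≤ ⟪gradient f y, δ⟫ + M * |β - γ| * ‖d‖ * ‖δ‖ :=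
    calc ⟪gradient f z, δ⟫ = ⟪gradient f y, δ⟫ + ⟪gradient f z - gradient f y, δ⟫ := by
          rw [inner_sub_left]; ring
      _ ≤ ⟪gradient f y, δ⟫ + M * ‖z - y‖ * ‖δ‖ := by
          gcongr
          exact (real_inner_le_norm _ _).trans
            (mul_le_mul_of_nonneg_right (hLip z hβS y hγS) (norm_nonneg δ))
      _ = ⟪gradient f y, δ⟫ + M * |β - γ| * ‖d‖ * ‖δ‖ := by
          rw [show z - y = (β - γ) • d by simp only [z, y]; module, norm_smul,
            Real.norm_eq_abs]
          ring
  have hinner : ⟪gradient f y, δ⟫ = (β * ⟪d, δ⟫ - ‖δ‖ ^ 2) / α := by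
    rw [eq_div_iff hα.ne', mul_comm, ← real_inner_smul_left, hstep, inner_sub_left,
      real_inner_smul_left, real_inner_self_eq_norm_sq]
  have hnorm₂ : ‖x₂ - z‖ ^ 2 = ‖δ‖ ^ 2 - 2 * β * ⟪d, δ⟫ + β ^ 2 * ‖d‖ ^ 2 := by
    rw [hz₂, norm_sub_sq_real, real_inner_smul_right, norm_smul, mul_pow, Real.norm_eq_abs,
      sq_abs, real_inner_comm]
    ring
  have hnorm₁ : ‖x₁ - z‖ ^ 2 = β ^ 2 * ‖d‖ ^ 2 := by
    rw [hz₁, norm_neg, norm_smul, mul_pow, Real.norm_eq_abs, sq_abs]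
  have hquad := momentum_quadratic_bound (β := β) hα hM hαM (abs_nonneg (β - γ))
    (abs_real_inner_le_norm d δ)
  rw [hnorm₂, hnorm₁] at hdescent
  linarith

end Descent

theorem momentum_lyapunov_decrease_general {n : ℕ}
    (f : EuclideanSpace ℝ (Fin n) → ℝ) (hf : ContDiff ℝ 1 f)
    (S : Set (EuclideanSpace ℝ (Fin n))) (hS : Convex ℝ S)
    (M α β γ lam : ℝ) (hM : 0 < M) (hα0 : 0 < α)
    (hα1 : α ≤ 1 / M)
    (hLip : ∀ u ∈ S, ∀ v ∈ S, ‖gradient f u - gradient f v‖ ≤ M * ‖u - v‖)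
    (xkm1 xk xkp1 : EuclideanSpace ℝ (Fin n))
    (hmem2 : xk ∈ S) (hmem3 : xkp1 ∈ S)
    (hmemβ : xk + β • (xk - xkm1) ∈ S) (hmemγ : xk + γ • (xk - xkm1) ∈ S)
    (hupdate : xkp1 = xk + β • (xk - xkm1) - α • gradient f (xk + γ • (xk - xkm1))) :
    f xkp1 + lam * ‖xkp1 - xk‖ ^ 2 ≤
      (f xk + lam * ‖xk - xkm1‖ ^ 2)
        - min (lam - ((1 / (2 * α) + M / 2) * β ^ 2 + |β - γ| * M / 2))
              ((1 / (2 * α) - |β - γ| * M / 2) - lam)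
          * (‖xkp1 - xk‖ ^ 2 + ‖xk - xkm1‖ ^ 2) :=
  add_mul_le_sub_min_mul_add (sq_nonneg _) (sq_nonneg _) <|
    hS.momentum_step_le (hf.differentiable one_ne_zero) hLip hM.le hα0
      ((le_div_iff₀' hM).1 hα1) hmem2 hmem3 hmemβ hmemγ hupdate

/-- Lyapunov decrease along one step of the momentum method (Lemma 3.1). -/
theorem momentum_lyapunov_decrease {n : ℕ}
    (f : EuclideanSpace ℝ (Fin n) → ℝ) (hf : ContDiff ℝ 1 f)
    (S : Set (EuclideanSpace ℝ (Fin n))) (hS : Convex ℝ S)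
    (M α β γ lam : ℝ) (hM : 0 < M) (hα0 : 0 < α)
    (hβ : β ∈ Set.Ioo (-1 : ℝ) 1)
    (hα1 : α ≤ 1 / M)
    (hα2 : β ^ 2 + 2 * |β - γ| ≠ 0 →
      α ≤ (1 - β ^ 2) / (2 * (β ^ 2 + 2 * |β - γ|) * M))
    (hlam : lam ∈ Set.Ioo ((1 / (2 * α) + M / 2) * β ^ 2 + |β - γ| * M / 2)
                          (1 / (2 * α) - |β - γ| * M / 2))
    (hLip : ∀ u ∈ S, ∀ v ∈ S, ‖gradient f u - gradient f v‖ ≤ M * ‖u - v‖)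
    (xkm1 xk xkp1 : EuclideanSpace ℝ (Fin n))
    (hmem1 : xkm1 ∈ S) (hmem2 : xk ∈ S) (hmem3 : xkp1 ∈ S)
    (hmemβ : xk + β • (xk - xkm1) ∈ S) (hmemγ : xk + γ • (xk - xkm1) ∈ S)
    (hupdate : xkp1 = xk + β • (xk - xkm1) - α • gradient f (xk + γ • (xk - xkm1))) :
    f xkp1 + lam * ‖xkp1 - xk‖ ^ 2 ≤
      (f xk + lam * ‖xk - xkm1‖ ^ 2)
        - min (lam - ((1 / (2 * α) + M / 2) * β ^ 2 + |β - γ| * M / 2))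
              ((1 / (2 * α) - |β - γ| * M / 2) - lam)
          * (‖xkp1 - xk‖ ^ 2 + ‖xk - xkm1‖ ^ 2) :=
  momentum_lyapunov_decrease_general f hf S hS M α β γ lam hM hα0 hα1 hLip xkm1 xk xkp1 hmem2 hmem3
    hmemβ hmemγ hupdate
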